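/- A group homomorphism from a torus ℝ^k/ℤ^k to (ℝ/ℤ)^n induced by an integer n×k matrix A is injective if and only if the rows of A generate ℤ^k. -/

import Mathlib

/-!
A point `x ∈ (ℝ/ℤ)^k` is the same as the homomorphism `v ↦ ∑ j, v j • x j` from `ℤ^k` to `ℝ/ℤ`,
and `ρ_A x = 0` says that this homomorphism kills the rows of `A`. So `ρ_A` is injective iff the
only homomorphism `ℤ^k → ℝ/ℤ` vanishing on the row span is zero. Since `ℚ/ℤ ⊆ ℝ/ℤ` is an
injective cogenerator, this holds iff the row span is everything.
-/

open Submodule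

noncomputable def AddCircle.ratCastHom : AddCircle (1 : ℚ) →+ AddCircle (1 : ℝ) :=
  QuotientAddGroup.map _ _ (Rat.castHom ℝ).toAddMonoidHom <| by
    rintro _ ⟨m, rfl⟩
    exact ⟨m, by simp⟩

theorem AddCircle.ratCastHom_injective : Function.Injective AddCircle.ratCastHom := by
  refine (injective_iff_map_eq_zero _).2 fun x hx => ?_
  induction x using QuotientAddGroup.induction_on with
  | H q =>
    obtain ⟨m, hm⟩ := (AddCircle.coe_eq_zero_iff 1).1 hx
    have hmq : (m : ℚ) = q := by exact_mod_cast (by simpa using hm : (m : ℝ) = q)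
    exact (AddCircle.coe_eq_zero_iff 1).2 ⟨m, by simpa using hmq⟩

theorem AddCircle.exists_addMonoidHom_apply_ne_zero {M : Type*} [AddCommGroup M] {a : M}
    (ha : a ≠ 0) : ∃ φ : M →+ AddCircle (1 : ℝ), φ a ≠ 0 := by
  obtain ⟨c, hc⟩ := CharacterModule.exists_character_apply_ne_zero_of_ne_zero ha
  exact ⟨AddCircle.ratCastHom.comp c, fun h => hc <|
    AddCircle.ratCastHom_injective (h.trans (map_zero _).symm)⟩

theorem span_int_eq_top_iff_forall_addCircle {M : Type*} [AddCommGroup M] (S : Set M) :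
    span ℤ S = ⊤ ↔ ∀ φ : M →ₗ[ℤ] AddCircle (1 : ℝ), (∀ v ∈ S, φ v = 0) → φ = 0 := by
  constructor
  · intro hS φ hφ
    rw [← LinearMap.ker_eq_top, eq_top_iff, ← hS, span_le]
    exact hφ
  · intro h
    refine eq_top_iff'.2 fun v => ?_
    by_contra hv
    have hv' : (span ℤ S).mkQ v ≠ 0 := by simpa [Quotient.mk_eq_zero] using hv
    obtain ⟨φ, hφ⟩ := AddCircle.exists_addMonoidHom_apply_ne_zero hv'
    refine hφ (LinearMap.congr_fun (h (φ.toIntLinearMap ∘ₗ (span ℤ S).mkQ) fun w hw => ?_) v)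
    simp [(Quotient.mk_eq_zero _).2 (subset_span hw)]

theorem injective_sum_zsmul_iff_forall_linearMap {ι κ G : Type*} [Fintype ι] [AddCommGroup G]
    (A : κ → ι → ℤ) :
    Function.Injective (fun (x : ι → G) (i : κ) => ∑ j, A i j • x j) ↔
      ∀ φ : (ι → ℤ) →ₗ[ℤ] G, (∀ i, φ (A i) = 0) → φ = 0 := by
  classical
  set e := (LinearEquiv.piRing ℤ G ι ℤ).symm
  have he : ∀ x i, ∑ j, A i j • x j = e x (A i) := fun x i =>
    (LinearEquiv.piRing_symm_apply _ _ _).symm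
  simp only [he]
  constructor
  · intro hinj φ hφ
    obtain ⟨x, rfl⟩ := e.surjective φ
    have hx : x = 0 := hinj (by simp [hφ])
    simp [hx]
  · intro h x y hxy
    have hxy' := h (e (x - y)) fun i => by simpa [sub_eq_zero] using congr_fun hxy i
    exact sub_eq_zero.1 (e.injective (hxy'.trans (map_zero e).symm))

theorem torus_hom_injective_iff_rows_span (n k : ℕ) (A : Fin n → Fin k → ℤ) :
    Function.Injective
        (fun (x : Fin k → AddCircle (1 : ℝ)) (i : Fin n) => ∑ j, A i j • x j)
      ↔ Submodule.span ℤ (Set.range A) = (⊤ : Submodule ℤ (Fin k → ℤ)) := by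
  simp only [injective_sum_zsmul_iff_forall_linearMap, span_int_eq_top_iff_forall_addCircle,
    Set.forall_mem_range]
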